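/- For the twisted partial action of H4 on H_ss, the cocycle identity instance holds: (v1 · ω(v1', (gv)1)) ω(v2, v2'(gv)2) = ω(v1, v1') ω(v2 v2', gv), and both sides equal ((k1^2+k2^2)l1 + 2k1k2l2) + (2k1k2l1 + (k1^2+k2^2)l2)e1 + (2k1k3l1 + 2k1k4l2 + (k1^2+k2^2)l3 + 2k1k2l4)e2 + (-2k1k4l1 - 2k1k3l2 + 2k1k2l3 + (k1^2+k2^2)l4)e3, i.e., condition (h1·ω(m1,t1))ω(h2,m2t2) = ω(h1,m1)ω(h2m2,t) holds for h = m = v, t = gv. -/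

import Mathlib

open Quaternion TensorProduct

noncomputable section

/-- Sweedler's Hopf algebra `H₄` as a vector space over `ℝ`,
with basis `1, g, ν, gν` indexed by `Fin 4`. -/
abbrev H4 := Fin 4 → ℝ

namespace H4

/-- The canonical basis `1, g, ν, gν` of Sweedler's Hopf algebra. -/
def B : Module.Basis (Fin 4) ℝ H4 := Pi.basisFun ℝ (Fin 4)

/-- The unit `1` of `H₄`. -/
def u : H4 := B 0
/-- The grouplike element `g` of `H₄`. -/
def g : H4 := B 1
/-- The element `ν` of `H₄`. -/
def v : H4 := B 2
/-- The element `gν` of `H₄`. -/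
def w : H4 := B 3

/-- The multiplication of Sweedler's Hopf algebra, as a bilinear map:
`g² = 1`, `ν² = 0`, `gν = -νg`. -/
def mul4 : H4 →ₗ[ℝ] H4 →ₗ[ℝ] H4 :=
  B.constr ℝ ![B.constr ℝ ![u, g, v, w],
               B.constr ℝ ![g, u, w, v],
               B.constr ℝ ![v, -w, 0, 0],
               B.constr ℝ ![w, -v, 0, 0]]

/-- The comultiplication of Sweedler's Hopf algebra:
`Δ(1) = 1⊗1`, `Δ(g) = g⊗g`, `Δ(ν) = g⊗ν + ν⊗1`, `Δ(gν) = 1⊗gν + gν⊗g`. -/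
def Δ : H4 →ₗ[ℝ] H4 ⊗[ℝ] H4 :=
  B.constr ℝ ![u ⊗ₜ u, g ⊗ₜ g, g ⊗ₜ v + v ⊗ₜ u, u ⊗ₜ w + w ⊗ₜ g]

end H4

/-- The split semi-quaternion algebra `H_ss`:
`e1² = 1`, `e2² = 0`, `e3² = 0`, `e1e2 = e3 = -e2e1`,
`e2e3 = 0 = -e3e2`, `e3e1 = -e2 = -e1e3`. -/
abbrev Hss := ℍ[ℝ, 1, 0]

namespace Hss
def e1 : Hss := ⟨0, 1, 0, 0⟩
def e2 : Hss := ⟨0, 0, 1, 0⟩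
def e3 : Hss := ⟨0, 0, 0, 1⟩
/-- The basis `1, e1, e2, e3` of the split semi-quaternion algebra. -/
def Qb : Module.Basis (Fin 4) ℝ Hss := QuaternionAlgebra.basisOneIJK 1 0 0
end Hss

variable (k1 k2 k3 k4 l1 l2 l3 l4 : ℝ)

/-- The value `ν · 1 = ω(1,ν) = ω(ν,1) = k₁ + k₂e₁ + k₃e₂ - k₄e₃`. -/
def nu1 : Hss := k1 • 1 + k2 • Hss.e1 + k3 • Hss.e2 - k4 • Hss.e3

/-- The value `gν · 1 = ω(1,gν) = ω(gν,1) = l₁ + l₂e₁ + l₃e₂ + l₄e₃`. -/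
def gnu1 : Hss := l1 • 1 + l2 • Hss.e1 + l3 • Hss.e2 + l4 • Hss.e3

/-- The partial action `· : H₄ ⊗ H_ss → H_ss` from the paper:
`1` acts as the identity, `g · x = 0`, and `ν`, `gν` act via the parameters
`k₁,…,k₄,l₁,…,l₄` as in the table. -/
def actSS : H4 →ₗ[ℝ] Hss →ₗ[ℝ] Hss :=
  H4.B.constr ℝ
    ![LinearMap.id, 0,
      Hss.Qb.constr ℝ
        ![nu1 k1 k2 k3 k4,
          k2 • 1 + k1 • Hss.e1 + k4 • Hss.e2 - k3 • Hss.e3,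
          k1 • Hss.e2 + k2 • Hss.e3,
          k2 • Hss.e2 + k1 • Hss.e3],
      Hss.Qb.constr ℝ
        ![gnu1 l1 l2 l3 l4,
          l2 • 1 + l1 • Hss.e1 + l4 • Hss.e2 + l3 • Hss.e3,
          l1 • Hss.e2 - l2 • Hss.e3,
          -l2 • Hss.e2 + l1 • Hss.e3]]

/-- The value `ω(ν,ν) = (k₁²+k₂²) + 2k₁k₂e₁ + 2k₁k₃e₂ - 2k₁k₄e₃`. -/
def omvv : Hss :=
  (k1 ^ 2 + k2 ^ 2) • 1 + (2 * k1 * k2) • Hss.e1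
    + (2 * k1 * k3) • Hss.e2 - (2 * k1 * k4) • Hss.e3

/-- The value `ω(ν,gν) = ω(gν,ν)`. -/
def omvw : Hss :=
  (k1 * l1 + k2 * l2) • 1 + (k2 * l1 + k1 * l2) • Hss.e1
    + (k3 * l1 + k4 * l2 + k1 * l3 + k2 * l4) • Hss.e2
    + (-(k4 * l1) - k3 * l2 + k2 * l3 + k1 * l4) • Hss.e3

/-- The cocycle `ω : H₄ ⊗ H₄ → H_ss` from the paper's table. -/
def omSS : H4 →ₗ[ℝ] H4 →ₗ[ℝ] Hss :=
  H4.B.constr ℝ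
    ![H4.B.constr ℝ ![1, 0, nu1 k1 k2 k3 k4, gnu1 l1 l2 l3 l4],
      0,
      H4.B.constr ℝ ![nu1 k1 k2 k3 k4, 0, omvv k1 k2 k3 k4,
        omvw k1 k2 k3 k4 l1 l2 l3 l4],
      H4.B.constr ℝ ![gnu1 l1 l2 l3 l4, 0,
        omvw k1 k2 k3 k4 l1 l2 l3 l4, 0]]

/-!
Both sides collapse to a single summand. On the left, `g` acts by zero and `ω` vanishes as
soon as one argument is `g`, so of the eight summands only `(ν · ω(ν,1)) ω(1,gν)` survives; on
the right only `ω(ν,ν) ω(1,gν)` does. The identity thus reduces to `ν · (ν · 1) = ω(ν,ν)`, and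
the explicit value is the product `ω(ν,ν) ω(1,gν)` computed in `H_ss`.
-/

section CocycleMaps

variable {R H A : Type*} [CommSemiring R] [AddCommMonoid H] [Module R H]
  [Semiring A] [Algebra R A]

/-- `(h₁ ⊗ h₂) ⊗ ((m₁ ⊗ t₁) ⊗ (m₂ ⊗ t₂)) ↦ (h₁ · ω(m₁,t₁)) ω(h₂, m₂t₂)`. -/
def cocycleLeftMap (act : H →ₗ[R] A →ₗ[R] A) (ω : H →ₗ[R] H →ₗ[R] A)
    (mul : H →ₗ[R] H →ₗ[R] H) : (H ⊗[R] H) ⊗[R] ((H ⊗[R] H) ⊗[R] (H ⊗[R] H)) →ₗ[R] A :=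
  LinearMap.mul' R A ∘ₗ
    TensorProduct.map (TensorProduct.lift (act.compl₂ (TensorProduct.lift ω)))
      (TensorProduct.lift (ω.compl₂ (TensorProduct.lift mul))) ∘ₗ
    (tensorTensorTensorComm R H H (H ⊗[R] H) (H ⊗[R] H)).toLinearMap

/-- `(h₁ ⊗ h₂) ⊗ (m₁ ⊗ m₂) ↦ ω(h₁,m₁) ω(h₂m₂, t)`. -/
def cocycleRightMap (ω : H →ₗ[R] H →ₗ[R] A) (mul : H →ₗ[R] H →ₗ[R] H) (t : H) :
    (H ⊗[R] H) ⊗[R] (H ⊗[R] H) →ₗ[R] A :=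
  LinearMap.mul' R A ∘ₗ
    TensorProduct.map (TensorProduct.lift ω) (ω.flip t ∘ₗ TensorProduct.lift mul) ∘ₗ
    (tensorTensorTensorComm R H H H H).toLinearMap

@[simp]
theorem cocycleLeftMap_tmul (act : H →ₗ[R] A →ₗ[R] A) (ω : H →ₗ[R] H →ₗ[R] A)
    (mul : H →ₗ[R] H →ₗ[R] H) (h₁ h₂ m₁ t₁ m₂ t₂ : H) :
    cocycleLeftMap act ω mul ((h₁ ⊗ₜ h₂) ⊗ₜ ((m₁ ⊗ₜ t₁) ⊗ₜ (m₂ ⊗ₜ t₂))) =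
      act h₁ (ω m₁ t₁) * ω h₂ (mul m₂ t₂) :=
  rfl

@[simp]
theorem cocycleRightMap_tmul (ω : H →ₗ[R] H →ₗ[R] A) (mul : H →ₗ[R] H →ₗ[R] H)
    (t h₁ h₂ m₁ m₂ : H) :
    cocycleRightMap ω mul t ((h₁ ⊗ₜ h₂) ⊗ₜ (m₁ ⊗ₜ m₂)) = ω h₁ m₁ * ω (mul h₂ m₂) t :=
  rfl

end CocycleMaps

namespace H4

theorem Δ_v : Δ v = g ⊗ₜ[ℝ] v + v ⊗ₜ[ℝ] u := by
  simp [Δ, v]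

theorem Δ_w : Δ w = u ⊗ₜ[ℝ] w + w ⊗ₜ[ℝ] g := by
  simp [Δ, w]

theorem mul4_u (x : H4) : mul4 u x = x := by
  have : mul4 u = LinearMap.id := B.ext fun i => by
    fin_cases i <;> simp [mul4, u, g, v, w]
  rw [this, LinearMap.id_apply]

end H4

open H4

theorem actSS_g : actSS k1 k2 k3 k4 l1 l2 l3 l4 g = 0 := by
  simp [actSS, g]

theorem omSS_g_left : omSS k1 k2 k3 k4 l1 l2 l3 l4 g = 0 := by
  simp [omSS, g]

theorem omSS_g_right (h : H4) : omSS k1 k2 k3 k4 l1 l2 l3 l4 h g = 0 := by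
  have : (omSS k1 k2 k3 k4 l1 l2 l3 l4).flip g = 0 := B.ext fun i => by
    fin_cases i <;> simp [omSS, g]
  exact LinearMap.congr_fun this h

theorem omSS_u_w : omSS k1 k2 k3 k4 l1 l2 l3 l4 u w = gnu1 l1 l2 l3 l4 := by
  simp [omSS, u, w]

theorem omSS_v_u : omSS k1 k2 k3 k4 l1 l2 l3 l4 v u = nu1 k1 k2 k3 k4 := by
  simp [omSS, u, v]

theorem omSS_v_v : omSS k1 k2 k3 k4 l1 l2 l3 l4 v v = omvv k1 k2 k3 k4 := by
  simp [omSS, v]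

theorem Hss.Qb_constr_apply (f : Fin 4 → Hss) (q : Hss) :
    Hss.Qb.constr ℝ f q = q.re • f 0 + q.imI • f 1 + q.imJ • f 2 + q.imK • f 3 := by
  rw [Module.Basis.constr_apply_fintype, Fin.sum_univ_four]
  simp [Hss.Qb, Module.Basis.equivFun_apply, QuaternionAlgebra.coe_basisOneIJK_repr]

theorem actSS_v_nu1 :
    actSS k1 k2 k3 k4 l1 l2 l3 l4 v (nu1 k1 k2 k3 k4) = omvv k1 k2 k3 k4 := by
  rw [actSS, v, Module.Basis.constr_basis, Matrix.cons_val_two, Matrix.tail_cons,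
    Matrix.head_cons, Hss.Qb_constr_apply]
  ext <;> simp [nu1, omvv, Hss.e1, Hss.e2, Hss.e3] <;> ring

theorem omvv_mul_gnu1 :
    omvv k1 k2 k3 k4 * gnu1 l1 l2 l3 l4 =
      ((k1 ^ 2 + k2 ^ 2) * l1 + 2 * k1 * k2 * l2) • (1 : Hss)
        + (2 * k1 * k2 * l1 + (k1 ^ 2 + k2 ^ 2) * l2) • Hss.e1
        + (2 * k1 * k3 * l1 + 2 * k1 * k4 * l2 + (k1 ^ 2 + k2 ^ 2) * l3
            + 2 * k1 * k2 * l4) • Hss.e2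
        + (-(2 * k1 * k4 * l1) - 2 * k1 * k3 * l2 + 2 * k1 * k2 * l3
            + (k1 ^ 2 + k2 ^ 2) * l4) • Hss.e3 := by
  ext <;> simp [omvv, gnu1, Hss.e1, Hss.e2, Hss.e3] <;> ring

theorem cocycleLeftMap_v_v_w :
    cocycleLeftMap (actSS k1 k2 k3 k4 l1 l2 l3 l4) (omSS k1 k2 k3 k4 l1 l2 l3 l4) mul4
        (Δ v ⊗ₜ tensorTensorTensorComm ℝ H4 H4 H4 H4 (Δ v ⊗ₜ Δ w)) =
      actSS k1 k2 k3 k4 l1 l2 l3 l4 v (nu1 k1 k2 k3 k4) * gnu1 l1 l2 l3 l4 := by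
  simp [Δ_v, Δ_w, tmul_add, add_tmul, actSS_g, omSS_g_left, omSS_g_right, omSS_u_w,
    omSS_v_u, mul4_u]

theorem cocycleRightMap_v_v :
    cocycleRightMap (omSS k1 k2 k3 k4 l1 l2 l3 l4) mul4 w (Δ v ⊗ₜ Δ v) =
      omvv k1 k2 k3 k4 * gnu1 l1 l2 l3 l4 := by
  simp [Δ_v, tmul_add, add_tmul, omSS_g_left, omSS_g_right, omSS_u_w, omSS_v_v, mul4_u]

/-- The instance of the cocycle condition
`(h₁·ω(m₁,t₁))ω(h₂,m₂t₂) = ω(h₁,m₁)ω(h₂m₂,t)` for `h = m = ν`, `t = gν`,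
with both sides equal to the explicit element
`((k₁²+k₂²)l₁+2k₁k₂l₂) + (2k₁k₂l₁+(k₁²+k₂²)l₂)e₁ + (2k₁k₃l₁+2k₁k₄l₂+(k₁²+k₂²)l₃+2k₁k₂l₄)e₂
+ (-2k₁k₄l₁-2k₁k₃l₂+2k₁k₂l₃+(k₁²+k₂²)l₄)e₃`. -/
theorem omSS_cocycle_v_v_w :
    (LinearMap.mul' ℝ Hss ∘ₗ
        TensorProduct.map
          (TensorProduct.lift ((actSS k1 k2 k3 k4 l1 l2 l3 l4).compl₂ (TensorProduct.lift (omSS k1 k2 k3 k4 l1 l2 l3 l4))))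
          (TensorProduct.lift ((omSS k1 k2 k3 k4 l1 l2 l3 l4).compl₂ (TensorProduct.lift H4.mul4))) ∘ₗ
        (tensorTensorTensorComm ℝ H4 H4 (H4 ⊗[ℝ] H4) (H4 ⊗[ℝ] H4)).toLinearMap)
      (H4.Δ H4.v ⊗ₜ[ℝ]
        (tensorTensorTensorComm ℝ H4 H4 H4 H4 (H4.Δ H4.v ⊗ₜ[ℝ] H4.Δ H4.w))) =
    (LinearMap.mul' ℝ Hss ∘ₗ
        TensorProduct.map (TensorProduct.lift (omSS k1 k2 k3 k4 l1 l2 l3 l4))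
          ((omSS k1 k2 k3 k4 l1 l2 l3 l4).flip H4.w ∘ₗ TensorProduct.lift H4.mul4) ∘ₗ
        (tensorTensorTensorComm ℝ H4 H4 H4 H4).toLinearMap)
      (H4.Δ H4.v ⊗ₜ[ℝ] H4.Δ H4.v) ∧
    (LinearMap.mul' ℝ Hss ∘ₗ
        TensorProduct.map (TensorProduct.lift (omSS k1 k2 k3 k4 l1 l2 l3 l4))
          ((omSS k1 k2 k3 k4 l1 l2 l3 l4).flip H4.w ∘ₗ TensorProduct.lift H4.mul4) ∘ₗ
        (tensorTensorTensorComm ℝ H4 H4 H4 H4).toLinearMap)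
      (H4.Δ H4.v ⊗ₜ[ℝ] H4.Δ H4.v) =
      ((k1 ^ 2 + k2 ^ 2) * l1 + 2 * k1 * k2 * l2) • (1 : Hss)
        + (2 * k1 * k2 * l1 + (k1 ^ 2 + k2 ^ 2) * l2) • Hss.e1
        + (2 * k1 * k3 * l1 + 2 * k1 * k4 * l2 + (k1 ^ 2 + k2 ^ 2) * l3
            + 2 * k1 * k2 * l4) • Hss.e2
        + (-(2 * k1 * k4 * l1) - 2 * k1 * k3 * l2 + 2 * k1 * k2 * l3
            + (k1 ^ 2 + k2 ^ 2) * l4) • Hss.e3 := by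
  have left := cocycleLeftMap_v_v_w k1 k2 k3 k4 l1 l2 l3 l4
  rw [actSS_v_nu1] at left
  have right := cocycleRightMap_v_v k1 k2 k3 k4 l1 l2 l3 l4
  exact ⟨left.trans right.symm, right.trans (omvv_mul_gnu1 k1 k2 k3 k4 l1 l2 l3 l4)⟩
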